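/- arXiv:1502.00993 — 10 statements merged into one kernel-verified Lean document; each statement's English description precedes it below -/
import Mathlib

section
/- Let (V,E) be a link stream, Δ > 0, let (X,[b,e]) be a Δ-clique, and let l be a real number with max(b, e−Δ) ≤ l ≤ e such that for all distinct u, v ∈ X there exists t ∈ [l, e] with (t,u,v) ∈ E. Then (X,[b, l+Δ]) is a Δ-clique. (This is the right-extension step proved inside Lemma 1 of the paper: if l is the earliest, over pairs of X, of the last occurrence time of a link in [b,e], then the time interval can be extended to l+Δ.) -/
/-- A link stream has node type `α` (finite) and a finite set `E` of timed links
`(t, u, v) : ℝ × α × α`.  For a duration `Δ`, `(X, [b, e])` is a `Δ`-clique when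
`2 ≤ |X|`, `b ≤ e`, and every pair of distinct nodes of `X` interacts at least once
in every window `[τ, min (τ + Δ) e]` for `τ ∈ [b, max (e - Δ) b]`. -/
def IsDeltaClique {α : Type*} (E : Finset (ℝ × α × α)) (Δ : ℝ)
    (X : Finset α) (b e : ℝ) : Prop :=
  2 ≤ X.card ∧ b ≤ e ∧
    ∀ u ∈ X, ∀ v ∈ X, u ≠ v →
      ∀ τ : ℝ, b ≤ τ → τ ≤ max (e - Δ) b →
        ∃ t : ℝ, τ ≤ t ∧ t ≤ min (τ + Δ) e ∧ (t, u, v) ∈ E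

/-- A `Δ`-clique `(X, [b, e])` is maximal if any `Δ`-clique `(X', [b', e'])` with
`X ⊆ X'` and `[b, e] ⊆ [b', e']` equals it. -/
def IsMaxDeltaClique {α : Type*} (E : Finset (ℝ × α × α)) (Δ : ℝ)
    (X : Finset α) (b e : ℝ) : Prop :=
  IsDeltaClique E Δ X b e ∧
    ∀ X' : Finset α, ∀ b' e' : ℝ,
      IsDeltaClique E Δ X' b' e' → X ⊆ X' → b' ≤ b → e ≤ e' →
        X' = X ∧ b' = b ∧ e' = e

/-! Moving the right end from `e` to `l + Δ ≥ e` only enlarges the windows that start at most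
`max (e - Δ) b`, so those are served by the original clique; every other window starts in
`(e - Δ, l]` and contains the last link of the pair, which lies in `[l, e]`. -/

namespace IsDeltaClique

variable {α : Type*} {E : Finset (ℝ × α × α)} {Δ : ℝ} {X : Finset α} {b e : ℝ}

theorem exists_link_of_le_right (hC : IsDeltaClique E Δ X b e) {e' : ℝ} (he : e ≤ e')
    {u v : α} (hu : u ∈ X) (hv : v ∈ X) (huv : u ≠ v)
    {τ : ℝ} (hbτ : b ≤ τ) (hτ : τ ≤ max (e - Δ) b) :
    ∃ t : ℝ, τ ≤ t ∧ t ≤ min (τ + Δ) e' ∧ (t, u, v) ∈ E := by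
  obtain ⟨t, hτt, hte, htE⟩ := hC.2.2 u hu v hv huv τ hbτ hτ
  exact ⟨t, hτt, hte.trans (min_le_min_left _ he), htE⟩

end IsDeltaClique

theorem mem_window_of_late_link {Δ l e e' τ t : ℝ} (hlt : l ≤ t) (hte : t ≤ e)
    (hτl : τ ≤ l) (hτ : e - Δ < τ) (he : e ≤ e') :
    τ ≤ t ∧ t ≤ min (τ + Δ) e' :=
  ⟨hτl.trans hlt, le_min (by linarith) (hte.trans he)⟩

theorem right_extension_general {α : Type*}
    (E : Finset (ℝ × α × α)) (Δ : ℝ)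
    (X : Finset α) (b e : ℝ) (hC : IsDeltaClique E Δ X b e)
    (l : ℝ) (hl₁ : max b (e - Δ) ≤ l)
    (hlast : ∀ u ∈ X, ∀ v ∈ X, u ≠ v →
      ∃ t : ℝ, l ≤ t ∧ t ≤ e ∧ (t, u, v) ∈ E) :
    IsDeltaClique E Δ X b (l + Δ) := by
  obtain ⟨hbl, hel⟩ := max_le_iff.mp hl₁
  have he : e ≤ l + Δ := by linarith
  refine ⟨hC.1, hC.2.1.trans he, fun u hu v hv huv τ hbτ hτ => ?_⟩
  have hτl : τ ≤ l := by simpa [hbl] using hτ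
  by_cases hold : τ ≤ max (e - Δ) b
  · exact hC.exists_link_of_le_right he hu hv huv hbτ hold
  · obtain ⟨t, hlt, hte, htE⟩ := hlast u hu v hv huv
    have hlate : e - Δ < τ := (le_max_left _ _).trans_lt (not_le.mp hold)
    obtain ⟨hτt, hte'⟩ := mem_window_of_late_link hlt hte hτl hlate he
    exact ⟨t, hτt, hte', htE⟩

/-- right-extension step: if `(X, [b, e])` is a `Δ`-clique and
`l ∈ [max b (e - Δ), e]` is such that every pair of distinct nodes of `X` has a
link in `[l, e]`, then `(X, [b, l + Δ])` is a `Δ`-clique. -/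
theorem right_extension {α : Type*} [Fintype α] [DecidableEq α]
    (E : Finset (ℝ × α × α)) (Δ : ℝ) (hΔ : 0 < Δ)
    (hsym : ∀ t u v, (t, u, v) ∈ E → (t, v, u) ∈ E)
    (hloop : ∀ t v, (t, v, v) ∉ E)
    (X : Finset α) (b e : ℝ) (hC : IsDeltaClique E Δ X b e)
    (l : ℝ) (hl₁ : max b (e - Δ) ≤ l) (hl₂ : l ≤ e)
    (hlast : ∀ u ∈ X, ∀ v ∈ X, u ≠ v →
      ∃ t : ℝ, l ≤ t ∧ t ≤ e ∧ (t, u, v) ∈ E) :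
    IsDeltaClique E Δ X b (l + Δ) :=
  right_extension_general E Δ X b e hC l hl₁ hlast
end

section
/- Let (V,E) be a link stream, Δ > 0, let (X,[b,e]) be a Δ-clique, and let f be a real number with b ≤ f ≤ min(b+Δ, e) such that for all distinct u, v ∈ X there exists t ∈ [b, f] with (t,u,v) ∈ E. Then (X,[f−Δ, e]) is a Δ-clique. (This is the left-extension step proved inside Lemma 1 of the paper: if f is the latest, over pairs of X, of the first occurrence time of a link in [b,e], then the time interval can be extended back to f−Δ.) -/
/-- Moving the left end of a `Δ`-clique back to `b'` only adds the windows starting in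
`[b', b]`, and each of them contains `[b, min (b' + Δ) e]`. -/
theorem IsDeltaClique.extend_left {α : Type*} {E : Finset (ℝ × α × α)} {Δ : ℝ}
    {X : Finset α} {b e b' : ℝ} (hC : IsDeltaClique E Δ X b e) (hb' : b' ≤ b)
    (hlink : ∀ u ∈ X, ∀ v ∈ X, u ≠ v →
      ∃ t : ℝ, b ≤ t ∧ t ≤ min (b' + Δ) e ∧ (t, u, v) ∈ E) :
    IsDeltaClique E Δ X b' e := by
  obtain ⟨hcard, hbe, hwindow⟩ := hC
  refine ⟨hcard, hb'.trans hbe, fun u hu v hv huv τ hb'τ hτe => ?_⟩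
  rcases le_or_gt τ b with hτb | hbτ
  · obtain ⟨t, hbt, hte, htE⟩ := hlink u hu v hv huv
    exact ⟨t, hτb.trans hbt, hte.trans (min_le_min_right e (by linarith)), htE⟩
  · have hτ : τ ≤ e - Δ := by
      rcases le_max_iff.mp hτe with h | h
      · exact h
      · linarith
    exact hwindow u hu v hv huv τ hbτ.le (le_max_of_le_left hτ)

theorem left_extension_general {α : Type*}
    (E : Finset (ℝ × α × α)) (Δ : ℝ)
    (X : Finset α) (b e : ℝ) (hC : IsDeltaClique E Δ X b e)
    (f : ℝ) (hf₂ : f ≤ min (b + Δ) e)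
    (hfirst : ∀ u ∈ X, ∀ v ∈ X, u ≠ v →
      ∃ t : ℝ, b ≤ t ∧ t ≤ f ∧ (t, u, v) ∈ E) :
    IsDeltaClique E Δ X (f - Δ) e := by
  refine hC.extend_left (by linarith [hf₂.trans (min_le_left _ _)]) fun u hu v hv huv => ?_
  obtain ⟨t, hbt, htf, htE⟩ := hfirst u hu v hv huv
  have hfe : f ≤ e := hf₂.trans (min_le_right _ _)
  exact ⟨t, hbt, by rw [sub_add_cancel]; exact le_min htf (htf.trans hfe), htE⟩

/-- left-extension step: if `(X, [b, e])` is a `Δ`-clique and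
`f ∈ [b, min (b + Δ) e]` is such that every pair of distinct nodes of `X` has a
link in `[b, f]`, then `(X, [f - Δ, e])` is a `Δ`-clique. -/
theorem left_extension {α : Type*} [Fintype α] [DecidableEq α]
    (E : Finset (ℝ × α × α)) (Δ : ℝ) (hΔ : 0 < Δ)
    (hsym : ∀ t u v, (t, u, v) ∈ E → (t, v, u) ∈ E)
    (hloop : ∀ t v, (t, v, v) ∉ E)
    (X : Finset α) (b e : ℝ) (hC : IsDeltaClique E Δ X b e)
    (f : ℝ) (hf₁ : b ≤ f) (hf₂ : f ≤ min (b + Δ) e)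
    (hfirst : ∀ u ∈ X, ∀ v ∈ X, u ≠ v →
      ∃ t : ℝ, b ≤ t ∧ t ≤ f ∧ (t, u, v) ∈ E) :
    IsDeltaClique E Δ X (f - Δ) e :=
  left_extension_general E Δ X b e hC f hf₂ hfirst
end

section
/- Let (V,E) be a link stream, Δ > 0, and suppose both (X,[b,e]) and (X,[b',e']) are Δ-cliques with b' ≤ b ≤ e ≤ e'. Then (X,[b',e]) and (X,[b,e']) are also Δ-cliques. (One-sided restrictions of a larger time interval containing a Δ-clique on the same node set are again Δ-cliques.) -/
namespace IsDeltaClique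

variable {α : Type*} {E : Finset (ℝ × α × α)} {Δ : ℝ} {X : Finset α} {b e : ℝ}

theorem iff_exists_link :
    IsDeltaClique E Δ X b e ↔ 2 ≤ X.card ∧ b ≤ e ∧ ∀ u ∈ X, ∀ v ∈ X, u ≠ v →
      (∃ t ∈ Set.Icc b e, (t, u, v) ∈ E) ∧
        ∀ τ, b ≤ τ → τ + Δ ≤ e → ∃ t ∈ Set.Icc τ (τ + Δ), (t, u, v) ∈ E := by
  refine and_congr_right fun _ => and_congr_right fun hbe => ?_
  refine forall₂_congr fun u _ => forall₂_congr fun v _ => forall_congr' fun _ => ⟨?_, ?_⟩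
  · intro h
    refine ⟨?_, fun τ hbτ hτe => ?_⟩
    · obtain ⟨t, hbt, hte, ht⟩ := h b le_rfl (le_max_right _ _)
      exact ⟨t, ⟨hbt, hte.trans (min_le_right _ _)⟩, ht⟩
    · obtain ⟨t, hτt, hte, ht⟩ := h τ hbτ (le_max_of_le_left (by linarith))
      exact ⟨t, ⟨hτt, hte.trans (min_le_left _ _)⟩, ht⟩
  · rintro ⟨⟨t, ⟨hbt, hte⟩, ht⟩, hwindow⟩ τ hbτ hτmax
    by_cases hfull : τ + Δ ≤ e
    · obtain ⟨s, ⟨hτs, hsΔ⟩, hs⟩ := hwindow τ hbτ hfull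
      exact ⟨s, hτs, le_min hsΔ (hsΔ.trans hfull), hs⟩
    · have hτb : τ ≤ b := by
        rcases le_max_iff.mp hτmax with h | h
        · linarith
        · exact h
      exact ⟨t, hτb.trans hbt, le_min (by linarith) hte, ht⟩

theorem exists_link_mem_Icc (h : IsDeltaClique E Δ X b e) {u v : α} (hu : u ∈ X) (hv : v ∈ X)
    (huv : u ≠ v) : ∃ t ∈ Set.Icc b e, (t, u, v) ∈ E :=
  ((iff_exists_link.mp h).2.2 u hu v hv huv).1

theorem of_Icc_subset {b₀ e₀ : ℝ} (h : IsDeltaClique E Δ X b₀ e₀) (hb : b₀ ≤ b) (he : e ≤ e₀)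
    (hbe : b ≤ e) (hlink : ∀ u ∈ X, ∀ v ∈ X, u ≠ v → ∃ t ∈ Set.Icc b e, (t, u, v) ∈ E) :
    IsDeltaClique E Δ X b e := by
  obtain ⟨hcard, -, hpairs⟩ := iff_exists_link.mp h
  refine iff_exists_link.mpr ⟨hcard, hbe, fun u hu v hv huv => ⟨hlink u hu v hv huv, ?_⟩⟩
  exact fun τ hbτ hτe => (hpairs u hu v hv huv).2 τ (hb.trans hbτ) (hτe.trans he)

end IsDeltaClique

theorem one_sided_restriction_general {α : Type*}
    (E : Finset (ℝ × α × α)) (Δ : ℝ)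
    (X : Finset α) (b e b' e' : ℝ)
    (hC : IsDeltaClique E Δ X b e) (hC' : IsDeltaClique E Δ X b' e')
    (hb : b' ≤ b) (he : e ≤ e') :
    IsDeltaClique E Δ X b' e ∧ IsDeltaClique E Δ X b e' := by
  have hbe : b ≤ e := hC.2.1
  have hlink (b₀ e₀ : ℝ) (hb₀ : b₀ ≤ b) (he₀ : e ≤ e₀) :
      ∀ u ∈ X, ∀ v ∈ X, u ≠ v → ∃ t ∈ Set.Icc b₀ e₀, (t, u, v) ∈ E := fun u hu v hv huv =>
    (hC.exists_link_mem_Icc hu hv huv).imp fun _ ⟨ht, hl⟩ => ⟨Set.Icc_subset_Icc hb₀ he₀ ht, hl⟩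
  exact ⟨hC'.of_Icc_subset le_rfl he (hb.trans hbe) (hlink b' e hb le_rfl),
    hC'.of_Icc_subset hb le_rfl (hbe.trans he) (hlink b e' le_rfl he)⟩

/-- if `(X, [b, e])` and `(X, [b', e'])` are `Δ`-cliques with
`b' ≤ b ≤ e ≤ e'`, then `(X, [b', e])` and `(X, [b, e'])` are `Δ`-cliques too. -/
theorem one_sided_restriction {α : Type*} [Fintype α] [DecidableEq α]
    (E : Finset (ℝ × α × α)) (Δ : ℝ) (hΔ : 0 < Δ)
    (hsym : ∀ t u v, (t, u, v) ∈ E → (t, v, u) ∈ E)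
    (hloop : ∀ t v, (t, v, v) ∉ E)
    (X : Finset α) (b e b' e' : ℝ)
    (hC : IsDeltaClique E Δ X b e) (hC' : IsDeltaClique E Δ X b' e')
    (hb : b' ≤ b) (he : e ≤ e') :
    IsDeltaClique E Δ X b' e ∧ IsDeltaClique E Δ X b e' :=
  one_sided_restriction_general E Δ X b e b' e' hC hC' hb he
end

section
/- Let (V,E) be a link stream, Δ > 0, and let (X,[b,e]) be a maximal Δ-clique. Let s be the earliest occurrence time of a link in (X,[b,e]); that is, s ∈ [b,e], there exist distinct u, v ∈ X with (s,u,v) ∈ E, and there is no t ∈ [b, s) and distinct u, v ∈ X with (t,u,v) ∈ E. Then e ≥ s + Δ. -/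
/-!
Suppose `e < s + Δ`. Then `(X, [b, s + Δ])` is still a `Δ`-clique: a window starting at
`τ ≤ max (e - Δ) b` is served by the original clique, and a window starting at a later
`τ ≤ s` contains the link found in the last original window, which occurs no earlier than
`s` (no link of `X` lies in `[b, s)`) and no later than `e < τ + Δ`. Maximality then forces
`s + Δ = e`, a contradiction.
-/

theorem IsDeltaClique.extend_end_of_no_link_before {α : Type*} {E : Finset (ℝ × α × α)}
    {Δ : ℝ} {X : Finset α} {b e : ℝ} (hc : IsDeltaClique E Δ X b e) {s e' : ℝ}
    (hbs : b ≤ s)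
    (hquiet : ∀ t : ℝ, b ≤ t → t < s → ∀ u ∈ X, ∀ v ∈ X, u ≠ v → (t, u, v) ∉ E)
    (hee' : e ≤ e') (he's : e' ≤ s + Δ) :
    IsDeltaClique E Δ X b e' := by
  obtain ⟨hcard, hbe, hwin⟩ := hc
  refine ⟨hcard, hbe.trans hee', fun u hu v hv huv τ hbτ hτ => ?_⟩
  have hτs : τ ≤ s := hτ.trans (max_le (by linarith) hbs)
  by_cases hearly : τ ≤ max (e - Δ) b
  · obtain ⟨t, hτt, hte, hE⟩ := hwin u hu v hv huv τ hbτ hearly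
    exact ⟨t, hτt, hte.trans (min_le_min_left _ hee'), hE⟩
  · rw [not_le] at hearly
    obtain ⟨t, hlast, hte, hE⟩ := hwin u hu v hv huv _ (le_max_right _ _) le_rfl
    have hst : s ≤ t := by
      by_contra! hts
      exact hquiet t ((le_max_right _ _).trans hlast) hts u hu v hv huv hE
    have hte : t ≤ e := hte.trans (min_le_right _ _)
    have hlate : e - Δ < τ := (le_max_left _ _).trans_lt hearly
    exact ⟨t, hτs.trans hst, le_min (by linarith) (hte.trans hee'), hE⟩

theorem max_clique_width_general {α : Type*}
    (E : Finset (ℝ × α × α)) (Δ : ℝ)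
    (X : Finset α) (b e : ℝ) (hmax : IsMaxDeltaClique E Δ X b e)
    (s : ℝ) (hs₁ : b ≤ s)
    (hs₄ : ∀ t : ℝ, b ≤ t → t < s →
      ∀ u ∈ X, ∀ v ∈ X, u ≠ v → (t, u, v) ∉ E) :
    s + Δ ≤ e := by
  by_contra! hshort
  have hext : IsDeltaClique E Δ X b (s + Δ) :=
    hmax.1.extend_end_of_no_link_before hs₁ hs₄ hshort.le le_rfl
  have heq : s + Δ = e := (hmax.2 X b _ hext subset_rfl le_rfl hshort.le).2.2
  exact hshort.ne' heq

/-- if `(X, [b, e])` is a maximal `Δ`-clique and `s` is the earliest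
occurrence time of a link in it, then `e ≥ s + Δ`. -/
theorem max_clique_width {α : Type*} [Fintype α] [DecidableEq α]
    (E : Finset (ℝ × α × α)) (Δ : ℝ) (hΔ : 0 < Δ)
    (hsym : ∀ t u v, (t, u, v) ∈ E → (t, v, u) ∈ E)
    (hloop : ∀ t v, (t, v, v) ∉ E)
    (X : Finset α) (b e : ℝ) (hmax : IsMaxDeltaClique E Δ X b e)
    (s : ℝ) (hs₁ : b ≤ s) (hs₂ : s ≤ e)
    (hs₃ : ∃ u ∈ X, ∃ v ∈ X, u ≠ v ∧ (s, u, v) ∈ E)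
    (hs₄ : ∀ t : ℝ, b ≤ t → t < s →
      ∀ u ∈ X, ∀ v ∈ X, u ≠ v → (t, u, v) ∉ E) :
    s + Δ ≤ e :=
  max_clique_width_general E Δ X b e hmax s hs₁ hs₄
end

section
/- Let (V,E) be a link stream, Δ > 0, and let (X,[b,e]) be a maximal Δ-clique. Then there exist distinct u, v ∈ X such that (e−Δ, u, v) ∈ E and there is no t ∈ (e−Δ, e] with (t,u,v) ∈ E. (The earliest last occurrence time, over pairs of X, of a link in [b,e] is exactly e − Δ.) -/
theorem Finset.exists_gt_forall_gt_imp_le {β : Type*} [LinearOrder β] [NoMaxOrder β]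
    (s : Finset β) (a : β) : ∃ a' > a, ∀ x ∈ s, a < x → a' ≤ x := by
  obtain ⟨c, hc⟩ := exists_gt a
  let t := insert c (s.filter (a < ·))
  have ht : t.Nonempty := insert_nonempty _ _
  refine ⟨t.min' ht, ?_, fun x hx hax ↦ t.min'_le x (mem_insert_of_mem (mem_filter.2 ⟨hx, hax⟩))⟩
  rw [gt_iff_lt, lt_min'_iff]
  simp only [t, forall_mem_insert, mem_filter]
  exact ⟨hc, fun _ hx ↦ hx.2⟩

section DeltaClique

variable {α : Type*} {E : Finset (ℝ × α × α)} {Δ : ℝ} {X : Finset α} {b e : ℝ}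

theorem IsDeltaClique.exists_link_mem_Icc_s10 (h : IsDeltaClique E Δ X b e) {u v : α}
    (hu : u ∈ X) (hv : v ∈ X) (huv : u ≠ v) :
    ∃ t, e - Δ ≤ t ∧ t ≤ e ∧ (t, u, v) ∈ E := by
  obtain ⟨t, hτt, hte, hE⟩ := h.2.2 u hu v hv huv _ (le_max_right _ _) le_rfl
  exact ⟨t, (le_max_left _ _).trans hτt, hte.trans (min_le_right _ _), hE⟩

theorem IsDeltaClique.extend_right (h : IsDeltaClique E Δ X b e) {e' : ℝ} (hee' : e ≤ e')
    (hlink : ∀ u ∈ X, ∀ v ∈ X, u ≠ v → ∃ t, e' - Δ ≤ t ∧ t ≤ e ∧ (t, u, v) ∈ E) :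
    IsDeltaClique E Δ X b e' := by
  obtain ⟨hcard, hbe, hwin⟩ := h
  refine ⟨hcard, hbe.trans hee', fun u hu v hv huv τ hbτ hτ ↦ ?_⟩
  by_cases hτold : τ ≤ max (e - Δ) b
  · obtain ⟨t, hτt, ht, hE⟩ := hwin u hu v hv huv τ hbτ hτold
    refine ⟨t, hτt, le_min (ht.trans (min_le_left _ _)) ?_, hE⟩
    exact (ht.trans (min_le_right _ _)).trans hee'
  · -- a window starting in `(e - Δ, e' - Δ]` contains `[e' - Δ, e]`
    obtain ⟨t, hτt, hte, hE⟩ := hlink u hu v hv huv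
    rw [not_le, max_lt_iff] at hτold
    have hτ' : τ ≤ e' - Δ := (le_max_iff.1 hτ).resolve_right (not_le.2 hτold.2)
    exact ⟨t, hτ'.trans hτt, le_min (by linarith) (hte.trans hee'), hE⟩

theorem IsMaxDeltaClique.exists_no_link_Ioc (h : IsMaxDeltaClique E Δ X b e) :
    ∃ u ∈ X, ∃ v ∈ X, u ≠ v ∧ ∀ t, e - Δ < t → t ≤ e → (t, u, v) ∉ E := by
  by_contra! hlink
  obtain ⟨a, hea, ha⟩ := (E.image Prod.fst).exists_gt_forall_gt_imp_le (e - Δ)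
  have hclique : IsDeltaClique E Δ X b (a + Δ) := by
    refine h.1.extend_right (by linarith) fun u hu v hv huv ↦ ?_
    obtain ⟨t, hlt, hte, hE⟩ := hlink u hu v hv huv
    exact ⟨t, by simpa using ha t (Finset.mem_image_of_mem _ hE) hlt, hte, hE⟩
  have := (h.2 X b (a + Δ) hclique subset_rfl le_rfl (by linarith)).2.2
  linarith

end DeltaClique

theorem max_clique_earliest_last_occurrence_general {α : Type*}
    (E : Finset (ℝ × α × α)) (Δ : ℝ)
    (X : Finset α) (b e : ℝ) (hmax : IsMaxDeltaClique E Δ X b e) :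
    ∃ u ∈ X, ∃ v ∈ X, u ≠ v ∧ (e - Δ, u, v) ∈ E ∧
      ∀ t : ℝ, e - Δ < t → t ≤ e → (t, u, v) ∉ E := by
  obtain ⟨u, hu, v, hv, huv, hnone⟩ := hmax.exists_no_link_Ioc
  obtain ⟨t, het, hte, hE⟩ := hmax.1.exists_link_mem_Icc_s10 hu hv huv
  obtain rfl : t = e - Δ := het.antisymm' (not_lt.1 fun hlt ↦ hnone t hlt hte hE)
  exact ⟨u, hu, v, hv, huv, hE, hnone⟩

/-- in a maximal `Δ`-clique `(X, [b, e])`, some pair of distinct nodes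
of `X` has a link at time `e - Δ` and no link at any time in `(e - Δ, e]`. -/
theorem max_clique_earliest_last_occurrence {α : Type*} [Fintype α] [DecidableEq α]
    (E : Finset (ℝ × α × α)) (Δ : ℝ) (hΔ : 0 < Δ)
    (hsym : ∀ t u v, (t, u, v) ∈ E → (t, v, u) ∈ E)
    (hloop : ∀ t v, (t, v, v) ∉ E)
    (X : Finset α) (b e : ℝ) (hmax : IsMaxDeltaClique E Δ X b e) :
    ∃ u ∈ X, ∃ v ∈ X, u ≠ v ∧ (e - Δ, u, v) ∈ E ∧
      ∀ t : ℝ, e - Δ < t → t ≤ e → (t, u, v) ∉ E :=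
  max_clique_earliest_last_occurrence_general E Δ X b e hmax
end

section
/- Let (V,E) be a link stream, Δ > 0, let (X,[b,e]) be a maximal Δ-clique, and let s be the earliest occurrence time of a link in (X,[b,e]) (i.e., s ∈ [b,e], some link of E between two distinct nodes of X occurs at time s, and no link of E between two nodes of X occurs at a time in [b, s)). Then for every subset Y ⊆ X with |Y| ≥ 2, the pair (Y, [s, s+Δ]) is a Δ-clique. -/
section

variable {α : Type*} {E : Finset (ℝ × α × α)} {Δ : ℝ}

/-- On an interval of length exactly `Δ` the only window starts at `s`. -/
theorem isDeltaClique_add_of_forall_link {Y : Finset α} {s : ℝ} (hΔ : 0 ≤ Δ)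
    (hcard : 2 ≤ Y.card)
    (hlink : ∀ u ∈ Y, ∀ v ∈ Y, u ≠ v → ∃ t, s ≤ t ∧ t ≤ s + Δ ∧ (t, u, v) ∈ E) :
    IsDeltaClique E Δ Y s (s + Δ) := by
  refine ⟨hcard, by linarith, fun u hu v hv huv τ hsτ hτ => ?_⟩
  have hτs : τ = s := le_antisymm (by simpa using hτ) hsτ
  subst hτs
  obtain ⟨t, hτt, ht, hE⟩ := hlink u hu v hv huv
  exact ⟨t, hτt, le_min ht (by linarith), hE⟩

/-- A window starting at `τ` is cut back to the last admissible start `max (e - Δ) b`. -/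
theorem IsDeltaClique.exists_link_le_add {X : Finset α} {b e : ℝ}
    (hX : IsDeltaClique E Δ X b e) {u v : α} (hu : u ∈ X) (hv : v ∈ X) (huv : u ≠ v)
    {τ : ℝ} (hbτ : b ≤ τ) :
    ∃ t, min τ (max (e - Δ) b) ≤ t ∧ t ≤ τ + Δ ∧ (t, u, v) ∈ E := by
  obtain ⟨t, ht₁, ht₂, hE⟩ :=
    hX.2.2 u hu v hv huv (min τ (max (e - Δ) b)) (le_min hbτ (le_max_right _ _))
      (min_le_right _ _)
  have : min τ (max (e - Δ) b) + Δ ≤ τ + Δ := by gcongr; exact min_le_left _ _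
  exact ⟨t, ht₁, (ht₂.trans (min_le_left _ _)).trans this, hE⟩

end

theorem subsets_clique_at_earliest_general {α : Type*}
    (E : Finset (ℝ × α × α)) (Δ : ℝ) (hΔ : 0 < Δ)
    (X : Finset α) (b e : ℝ) (hmax : IsMaxDeltaClique E Δ X b e)
    (s : ℝ) (hs₁ : b ≤ s)
    (hs₄ : ∀ t : ℝ, b ≤ t → t < s →
      ∀ u ∈ X, ∀ v ∈ X, u ≠ v → (t, u, v) ∉ E) :
    ∀ Y : Finset α, Y ⊆ X → 2 ≤ Y.card →
      IsDeltaClique E Δ Y s (s + Δ) := by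
  intro Y hYX hYcard
  refine isDeltaClique_add_of_forall_link hΔ.le hYcard fun u hu v hv huv => ?_
  obtain ⟨t, hst, hts, hE⟩ := hmax.1.exists_link_le_add (hYX hu) (hYX hv) huv hs₁
  refine ⟨t, ?_, hts, hE⟩
  by_contra! hlt
  have hbt : b ≤ t := (le_min hs₁ (le_max_right _ _)).trans hst
  exact hs₄ t hbt hlt u (hYX hu) v (hYX hv) huv hE

/-- if `(X, [b, e])` is a maximal `Δ`-clique and `s` is the earliest
occurrence time of a link in it, then `(Y, [s, s + Δ])` is a `Δ`-clique for every
`Y ⊆ X` with `|Y| ≥ 2`. -/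
theorem subsets_clique_at_earliest {α : Type*} [Fintype α] [DecidableEq α]
    (E : Finset (ℝ × α × α)) (Δ : ℝ) (hΔ : 0 < Δ)
    (hsym : ∀ t u v, (t, u, v) ∈ E → (t, v, u) ∈ E)
    (hloop : ∀ t v, (t, v, v) ∉ E)
    (X : Finset α) (b e : ℝ) (hmax : IsMaxDeltaClique E Δ X b e)
    (s : ℝ) (hs₁ : b ≤ s) (hs₂ : s ≤ e)
    (hs₃ : ∃ u ∈ X, ∃ v ∈ X, u ≠ v ∧ (s, u, v) ∈ E)
    (hs₄ : ∀ t : ℝ, b ≤ t → t < s →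
      ∀ u ∈ X, ∀ v ∈ X, u ≠ v → (t, u, v) ∉ E) :
    ∀ Y : Finset α, Y ⊆ X → 2 ≤ Y.card →
      IsDeltaClique E Δ Y s (s + Δ) :=
  subsets_clique_at_earliest_general E Δ hΔ X b e hmax s hs₁ hs₄
end

section
/- Let (V,E) be a link stream, Δ > 0, and suppose (X,[b,e]) and (X,[b,e']) are both Δ-cliques with e < e', and that no link of E between two nodes of X occurs at a time in (e, e']. Then for all distinct u, v ∈ X there exists t with e' − Δ ≤ t ≤ e and (t,u,v) ∈ E. (In particular the earliest last occurrence time, over pairs of X, of a link in [b,e] is at least e' − Δ > e − Δ.) -/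
theorem IsDeltaClique.exists_link_mem_last_window {α : Type*} {E : Finset (ℝ × α × α)}
    {Δ : ℝ} {X : Finset α} {b e : ℝ} (hC : IsDeltaClique E Δ X b e)
    {u v : α} (hu : u ∈ X) (hv : v ∈ X) (huv : u ≠ v) :
    ∃ t ∈ Set.Icc (max (e - Δ) b) e, (t, u, v) ∈ E := by
  obtain ⟨t, hτt, ht, hE⟩ :=
    hC.2.2 u hu v hv huv (max (e - Δ) b) (le_max_right _ _) le_rfl
  exact ⟨t, ⟨hτt, ht.trans (min_le_right _ _)⟩, hE⟩

theorem last_occurrence_bound_general {α : Type*}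
    (E : Finset (ℝ × α × α)) (Δ : ℝ)
    (X : Finset α) (b e e' : ℝ)
    (hC' : IsDeltaClique E Δ X b e')
    (hno : ∀ t : ℝ, e < t → t ≤ e' → ∀ u ∈ X, ∀ v ∈ X, (t, u, v) ∉ E) :
    ∀ u ∈ X, ∀ v ∈ X, u ≠ v →
      ∃ t : ℝ, e' - Δ ≤ t ∧ t ≤ e ∧ (t, u, v) ∈ E := by
  intro u hu v hv huv
  obtain ⟨t, ⟨hlow, hte'⟩, hE⟩ := hC'.exists_link_mem_last_window hu hv huv
  have hte : t ≤ e := not_lt.mp fun het => hno t het hte' u hu v hv hE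
  exact ⟨t, (le_max_left _ _).trans hlow, hte, hE⟩

/-- if `(X, [b, e])` and `(X, [b, e'])` are `Δ`-cliques with `e < e'`
and no link between nodes of `X` occurs at a time in `(e, e']`, then every pair of
distinct nodes of `X` has a link at some time `t` with `e' - Δ ≤ t ≤ e`. -/
theorem last_occurrence_bound {α : Type*} [Fintype α] [DecidableEq α]
    (E : Finset (ℝ × α × α)) (Δ : ℝ) (hΔ : 0 < Δ)
    (hsym : ∀ t u v, (t, u, v) ∈ E → (t, v, u) ∈ E)
    (hloop : ∀ t v, (t, v, v) ∉ E)
    (X : Finset α) (b e e' : ℝ)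
    (hC : IsDeltaClique E Δ X b e) (hC' : IsDeltaClique E Δ X b e')
    (hee' : e < e')
    (hno : ∀ t : ℝ, e < t → t ≤ e' → ∀ u ∈ X, ∀ v ∈ X, (t, u, v) ∉ E) :
    ∀ u ∈ X, ∀ v ∈ X, u ≠ v →
      ∃ t : ℝ, e' - Δ ≤ t ∧ t ≤ e ∧ (t, u, v) ∈ E :=
  last_occurrence_bound_general E Δ X b e e' hC' hno
end

section
/- Let (V,E) be a link stream and Δ > 0. A Δ-clique (X,[b,e]) is maximal if and only if the following three conditions hold: (i) there is no node v ∈ V \ X such that (X ∪ {v}, [b,e]) is a Δ-clique; (ii) there is no b' < b such that (X,[b',e]) is a Δ-clique; (iii) there is no e' > e such that (X,[b,e']) is a Δ-clique. -/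
/-! A Δ-clique containing `(X, [b, e])` restricts to a Δ-clique on `X` over its own interval
`[b', e']`, and gluing that with `(X, [b, e])` gives a Δ-clique `(X, [b, e'])`: the windows
starting after `max (e - Δ) b` lie in `[b', e']`. So condition (iii) forces `e' = e`, then (ii)
forces `b' = b`, and finally any extra node of the larger clique would contradict (i).
Shrinking the interval instead would not work: `[b', e]` can be a Δ-clique while
`[b, e] ⊂ [b', e]` is not, when `e - Δ < b' < b`. -/

open Finset

section

variable {α : Type*} {E : Finset (ℝ × α × α)} {Δ : ℝ}

theorem IsDeltaClique.subset {X Y : Finset α} {b e : ℝ} (hX : IsDeltaClique E Δ X b e)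
    (hYX : Y ⊆ X) (hY : 2 ≤ Y.card) : IsDeltaClique E Δ Y b e :=
  ⟨hY, hX.2.1, fun u hu v hv => hX.2.2 u (hYX hu) v (hYX hv)⟩

theorem IsDeltaClique.extend_right_s13 {X : Finset α} {b e b' e' : ℝ}
    (h : IsDeltaClique E Δ X b e) (h' : IsDeltaClique E Δ X b' e') (hb : b' ≤ b)
    (he : e ≤ e') : IsDeltaClique E Δ X b e' := by
  refine ⟨h.1, h.2.1.trans he, fun u hu v hv huv τ hbτ hτ => ?_⟩
  by_cases hτe : τ ≤ max (e - Δ) b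
  · obtain ⟨t, hτt, hte, htE⟩ := h.2.2 u hu v hv huv τ hbτ hτe
    exact ⟨t, hτt, hte.trans (min_le_min_left _ he), htE⟩
  · have hτe' : τ ≤ e' - Δ := by
      rcases le_max_iff.mp hτ with hτ | hτ
      · exact hτ
      · exact absurd (hτ.trans (le_max_right _ _)) hτe
    exact h'.2.2 u hu v hv huv τ (hb.trans hbτ) (le_max_of_le_left hτe')

end

theorem maximality_characterization_general {α : Type*} [DecidableEq α]
    (E : Finset (ℝ × α × α)) (Δ : ℝ)
    (X : Finset α) (b e : ℝ) (hC : IsDeltaClique E Δ X b e) :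
    IsMaxDeltaClique E Δ X b e ↔
      ((∀ v : α, v ∉ X → ¬ IsDeltaClique E Δ (insert v X) b e) ∧
       (∀ b' : ℝ, b' < b → ¬ IsDeltaClique E Δ X b' e) ∧
       (∀ e' : ℝ, e < e' → ¬ IsDeltaClique E Δ X b e')) := by
  refine ⟨fun ⟨_, hmax⟩ => ⟨?_, ?_, ?_⟩,
    fun ⟨hnodes, hleft, hright⟩ => ⟨hC, ?_⟩⟩
  · intro v hv hvX
    exact hv ((hmax _ b e hvX (subset_insert v X) le_rfl le_rfl).1 ▸ mem_insert_self v X)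
  · intro b' hb' hb'X
    exact hb'.ne (hmax X b' e hb'X subset_rfl hb'.le le_rfl).2.1
  · intro e' he' he'X
    exact he'.ne' (hmax X b e' he'X subset_rfl le_rfl he'.le).2.2
  · intro X' b' e' hC' hX hb he
    have hXb'e' := hC'.subset hX hC.1
    obtain rfl : e' = e := by
      by_contra hne
      exact hright e' (he.lt_of_ne' hne) (hC.extend_right_s13 hXb'e' hb he)
    obtain rfl : b' = b := by
      by_contra hne
      exact hleft b' (hb.lt_of_ne hne) hXb'e'
    refine ⟨?_, rfl, rfl⟩
    by_contra hne
    obtain ⟨v, hvX', hvX⟩ := exists_of_ssubset (hX.ssubset_of_ne (Ne.symm hne))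
    exact hnodes v hvX (hC'.subset (insert_subset hvX' hX)
      (hC.1.trans (card_le_card (subset_insert v X))))

/-- a `Δ`-clique `(X, [b, e])` is maximal iff (i) no node `v ∉ X`
yields a `Δ`-clique `(X ∪ {v}, [b, e])`, (ii) no `b' < b` yields a `Δ`-clique
`(X, [b', e])`, and (iii) no `e' > e` yields a `Δ`-clique `(X, [b, e'])`. -/
theorem maximality_characterization {α : Type*} [Fintype α] [DecidableEq α]
    (E : Finset (ℝ × α × α)) (Δ : ℝ) (hΔ : 0 < Δ)
    (hsym : ∀ t u v, (t, u, v) ∈ E → (t, v, u) ∈ E)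
    (hloop : ∀ t v, (t, v, v) ∉ E)
    (X : Finset α) (b e : ℝ) (hC : IsDeltaClique E Δ X b e) :
    IsMaxDeltaClique E Δ X b e ↔
      ((∀ v : α, v ∉ X → ¬ IsDeltaClique E Δ (insert v X) b e) ∧
       (∀ b' : ℝ, b' < b → ¬ IsDeltaClique E Δ X b' e) ∧
       (∀ e' : ℝ, e < e' → ¬ IsDeltaClique E Δ X b e')) :=
  maximality_characterization_general E Δ X b e hC
end

section
/- Let (V,E) be a link stream and Δ > 0. Every Δ-clique (X,[b,e]) of (V,E) is contained in some maximal Δ-clique (X',[b',e']), i.e., there exists a maximal Δ-clique with X ⊆ X' and [b,e] ⊆ [b',e']. -/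
/-!
The node set of a Δ-clique consists of nodes occurring in `E`, so among node sets of Δ-cliques
containing `(X, [b, e])` there is a maximal one, `Y`. For fixed `Y`, the set of endpoint pairs
`(b', e')` of Δ-cliques is closed in `ℝ × ℝ`: writing `τ` as a point of the segment
`[b', max (e' - Δ) b']` with a fixed barycentric parameter turns the definition into an
intersection of finite unions of closed sets. It is bounded, because every Δ-clique has links within
`Δ` of both of its endpoints. Over this compact set, maximise `e'` first and then minimise `b'`.
-/

open Set AffineMap

lemma forall_le_le_iff_forall_lineMap {𝕜 : Type*} [Field 𝕜] [LinearOrder 𝕜]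
    [IsStrictOrderedRing 𝕜] {a b : 𝕜} (hab : a ≤ b) {P : 𝕜 → Prop} :
    (∀ x, a ≤ x → x ≤ b → P x) ↔ ∀ s ∈ Icc (0 : 𝕜) 1, P (lineMap a b s) := by
  have := forall_mem_image (f := lineMap a b) (s := Icc (0 : 𝕜) 1) (p := P)
  rw [← segment_eq_image_lineMap, segment_eq_Icc hab] at this
  simpa only [mem_Icc, and_imp] using this

theorem IsCompact.exists_interval_maximal {K : Set (ℝ × ℝ)} (hK : IsCompact K)
    (hne : K.Nonempty) : ∃ q ∈ K, ∀ p ∈ K, p.1 ≤ q.1 → q.2 ≤ p.2 → p = q := by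
  obtain ⟨r, hrK, hr⟩ := hK.exists_isMaxOn hne continuous_snd.continuousOn
  obtain ⟨q, ⟨hqK, hqr⟩, hq⟩ := (hK.inter_right (isClosed_eq continuous_snd continuous_const :
    IsClosed {p : ℝ × ℝ | p.2 = r.2})).exists_isMinOn ⟨r, hrK, rfl⟩ continuous_fst.continuousOn
  refine ⟨q, hqK, fun p hpK hpq hqp => ?_⟩
  have hp2 : p.2 = q.2 := le_antisymm (hqr ▸ hr hpK) hqp
  exact Prod.ext (le_antisymm hpq (hq ⟨hpK, hp2.trans hqr⟩)) hp2

section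

variable {α : Type*} {E : Finset (ℝ × α × α)} {Δ : ℝ} {X : Finset α}

theorem isDeltaClique_iff_forall_lineMap {b e : ℝ} :
    IsDeltaClique E Δ X b e ↔ 2 ≤ X.card ∧ b ≤ e ∧ ∀ u ∈ X, ∀ v ∈ X, u ≠ v →
      ∀ s ∈ Icc (0 : ℝ) 1, ∃ t, lineMap b (max (e - Δ) b) s ≤ t ∧
        t ≤ min (lineMap b (max (e - Δ) b) s + Δ) e ∧ (t, u, v) ∈ E := by
  simp only [IsDeltaClique, forall_le_le_iff_forall_lineMap (le_max_right _ b)]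

theorem isClosed_setOf_isDeltaClique :
    IsClosed {p : ℝ × ℝ | IsDeltaClique E Δ X p.1 p.2} := by
  simp only [isDeltaClique_iff_forall_lineMap, ofPred_and, ofPred_forall]
  refine isClosed_const.inter ((isClosed_le continuous_fst continuous_snd).inter ?_)
  refine isClosed_iInter fun u => isClosed_iInter fun _ => isClosed_iInter fun v =>
    isClosed_iInter fun _ => isClosed_iInter fun _ => isClosed_iInter fun s =>
      isClosed_iInter fun _ => ?_
  have hfin : {t | (t, u, v) ∈ E}.Finite :=
    E.finite_toSet.preimage fun _ _ _ _ h => (Prod.ext_iff.1 h).1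
  have hwindow : ∀ t : ℝ, IsClosed {p : ℝ × ℝ | lineMap p.1 (max (p.2 - Δ) p.1) s ≤ t ∧
      t ≤ min (lineMap p.1 (max (p.2 - Δ) p.1) s + Δ) p.2} := fun t => by
    simp only [ofPred_and]
    exact (isClosed_le (by fun_prop) continuous_const).inter
      (isClosed_le continuous_const (by fun_prop))
  convert hfin.isClosed_biUnion fun t _ => hwindow t using 1
  ext p
  simp only [mem_ofPred_eq, mem_iUnion, exists_prop]
  exact exists_congr fun t => by tauto

namespace IsDeltaClique

variable {b e : ℝ}

theorem subset_image [DecidableEq α] (hC : IsDeltaClique E Δ X b e) :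
    X ⊆ E.image fun l => l.2.1 := by
  intro u hu
  obtain ⟨v, hv, hvu⟩ := X.exists_mem_ne hC.1 u
  obtain ⟨t, -, -, htE⟩ := hC.2.2 u hu v hv hvu.symm b le_rfl (le_max_right _ _)
  exact Finset.mem_image.2 ⟨_, htE, rfl⟩

theorem exists_link_le_add_s14 (hC : IsDeltaClique E Δ X b e) : ∃ l ∈ E, l.1 ≤ b + Δ := by
  obtain ⟨u, hu, v, hv, huv⟩ := Finset.one_lt_card.1 hC.1
  obtain ⟨t, -, ht, htE⟩ := hC.2.2 u hu v hv huv b le_rfl (le_max_right _ _)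
  exact ⟨_, htE, ht.trans (min_le_left _ _)⟩

theorem exists_link_sub_le (hC : IsDeltaClique E Δ X b e) : ∃ l ∈ E, e - Δ ≤ l.1 := by
  obtain ⟨u, hu, v, hv, huv⟩ := Finset.one_lt_card.1 hC.1
  obtain ⟨t, ht, -, htE⟩ := hC.2.2 u hu v hv huv _ (le_max_right _ _) le_rfl
  exact ⟨_, htE, (le_max_left _ _).trans ht⟩

end IsDeltaClique

theorem isCompact_setOf_isDeltaClique_containing (b e : ℝ) :
    IsCompact {p : ℝ × ℝ | p.1 ≤ b ∧ e ≤ p.2 ∧ IsDeltaClique E Δ X p.1 p.2} := by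
  obtain ⟨lo, hlo⟩ := (E.image Prod.fst).bddBelow
  obtain ⟨hi, hhi⟩ := (E.image Prod.fst).bddAbove
  refine (isCompact_Icc (a := (lo - Δ, e)) (b := (b, hi + Δ))).of_isClosed_subset ?_ ?_
  · simp only [ofPred_and]
    exact (isClosed_le continuous_fst continuous_const).inter
      ((isClosed_le continuous_const continuous_snd).inter isClosed_setOf_isDeltaClique)
  · rintro p ⟨hpb, hpe, hC⟩
    obtain ⟨l, hl, hlb⟩ := hC.exists_link_le_add_s14
    obtain ⟨l', hl', hle⟩ := hC.exists_link_sub_le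
    have := hlo (Finset.mem_image_of_mem Prod.fst hl)
    have := hhi (Finset.mem_image_of_mem Prod.fst hl')
    exact ⟨⟨by linarith, hpe⟩, ⟨hpb, by linarith⟩⟩

end

theorem exists_maximal_containing_general {α : Type*}
    (E : Finset (ℝ × α × α)) (Δ : ℝ)
    (X : Finset α) (b e : ℝ) (hC : IsDeltaClique E Δ X b e) :
    ∃ X' : Finset α, ∃ b' e' : ℝ,
      IsMaxDeltaClique E Δ X' b' e' ∧ X ⊆ X' ∧ b' ≤ b ∧ e ≤ e' := by
  classical
  set 𝒴 : Set (Finset α) :=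
    {Y | X ⊆ Y ∧ ∃ b' e', b' ≤ b ∧ e ≤ e' ∧ IsDeltaClique E Δ Y b' e'}
  have h𝒴 : 𝒴.Finite := (E.image fun l => l.2.1).powerset.finite_toSet.subset
    fun Y ⟨_, _, _, _, _, hY⟩ => Finset.mem_coe.2 (Finset.mem_powerset.2 hY.subset_image)
  obtain ⟨Y, hY⟩ := h𝒴.exists_maximal ⟨X, subset_rfl, b, e, le_rfl, le_rfl, hC⟩
  obtain ⟨hXY, b₀, e₀, hb₀, he₀, hY₀⟩ := hY.prop
  obtain ⟨q, ⟨hqb, hqe, hq⟩, hmax⟩ :=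
    (isCompact_setOf_isDeltaClique_containing b e).exists_interval_maximal
      ⟨(b₀, e₀), hb₀, he₀, hY₀⟩
  refine ⟨Y, q.1, q.2, ⟨hq, fun Y' b' e' hC' hYY' hb' he' => ?_⟩, hXY, hqb, hqe⟩
  obtain rfl : Y = Y' :=
    hY.eq_of_le ⟨hXY.trans hYY', b', e', hb'.trans hqb, hqe.trans he', hC'⟩ hYY'
  obtain rfl : (b', e') = q := hmax (b', e') ⟨hb'.trans hqb, hqe.trans he', hC'⟩ hb' he'
  exact ⟨rfl, rfl, rfl⟩

/-- every `Δ`-clique is contained in some maximal `Δ`-clique. -/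
theorem exists_maximal_containing {α : Type*} [Fintype α] [DecidableEq α]
    (E : Finset (ℝ × α × α)) (Δ : ℝ) (hΔ : 0 < Δ)
    (hsym : ∀ t u v, (t, u, v) ∈ E → (t, v, u) ∈ E)
    (hloop : ∀ t v, (t, v, v) ∉ E)
    (X : Finset α) (b e : ℝ) (hC : IsDeltaClique E Δ X b e) :
    ∃ X' : Finset α, ∃ b' e' : ℝ,
      IsMaxDeltaClique E Δ X' b' e' ∧ X ⊆ X' ∧ b' ≤ b ∧ e ≤ e' :=
  exists_maximal_containing_general E Δ X b e hC
end

section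
/- Let G be a finite simple graph on vertex set V, let Δ > 0, and consider the link stream (V, E) where E = {(0, u, v) : u and v are adjacent in G}. Then for every C ⊆ V with |C| ≥ 2, C is a maximal clique of G if and only if (C, [−Δ, Δ]) is a maximal Δ-clique of the link stream (V, E). (Enumerating maximal cliques of a graph is a special case of enumerating maximal Δ-cliques of a link stream.) -/
/-!
Every link of the stream sits at time `0`, so a `Δ`-clique `(X, [b, e])` needs a link of each pair
in its first window `[b, b + Δ]` and in its last window `[e - Δ, e]`; hence `X` is a clique of `G`
and `[b, e] ⊆ [-Δ, Δ]`. Conversely a clique of `G` is a `Δ`-clique on `[-Δ, Δ]`, every window of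
which contains `0`. Maximality on both sides therefore only concerns the node set.
-/

namespace IsDeltaClique

variable {α : Type*} {E : Finset (ℝ × α × α)} {Δ : ℝ} {X : Finset α} {b e : ℝ} {u v : α}

theorem exists_link_mem_Icc_start (h : IsDeltaClique E Δ X b e) (hu : u ∈ X) (hv : v ∈ X)
    (huv : u ≠ v) : ∃ t ∈ Set.Icc b (b + Δ), (t, u, v) ∈ E := by
  obtain ⟨t, hbt, hte, htE⟩ := h.2.2 u hu v hv huv b le_rfl (le_max_right _ _)
  exact ⟨t, ⟨hbt, (le_min_iff.mp hte).1⟩, htE⟩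

theorem exists_link_mem_Icc_end (h : IsDeltaClique E Δ X b e) (hu : u ∈ X) (hv : v ∈ X)
    (huv : u ≠ v) : ∃ t ∈ Set.Icc (e - Δ) e, (t, u, v) ∈ E := by
  obtain ⟨t, hτt, hte, htE⟩ := h.2.2 u hu v hv huv _ (le_max_right _ _) le_rfl
  exact ⟨t, ⟨(le_max_left _ _).trans hτt, (le_min_iff.mp hte).2⟩, htE⟩

theorem isClique {G : SimpleGraph α} (hE : ∀ t u v, (t, u, v) ∈ E → G.Adj u v)
    (h : IsDeltaClique E Δ X b e) : G.IsClique (X : Set α) := by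
  intro u hu v hv huv
  obtain ⟨t, -, htE⟩ := h.exists_link_mem_Icc_start hu hv huv
  exact hE t u v htE

theorem neg_le_and_le_of_time_eq_zero (hE : ∀ t u v, (t, u, v) ∈ E → t = 0)
    (h : IsDeltaClique E Δ X b e) : -Δ ≤ b ∧ e ≤ Δ := by
  obtain ⟨u, hu, v, hv, huv⟩ := Finset.one_lt_card.mp h.1
  obtain ⟨s, ⟨-, hs⟩, hsE⟩ := h.exists_link_mem_Icc_start hu hv huv
  obtain ⟨t, ⟨ht, -⟩, htE⟩ := h.exists_link_mem_Icc_end hu hv huv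
  obtain rfl := hE s u v hsE
  obtain rfl := hE t u v htE
  constructor <;> linarith

end IsDeltaClique

theorem isDeltaClique_of_isClique {α : Type*} {G : SimpleGraph α} {E : Finset (ℝ × α × α)}
    {Δ : ℝ} {X : Finset α} (hE : ∀ u v, G.Adj u v → ((0 : ℝ), u, v) ∈ E) (hΔ : 0 ≤ Δ)
    (hX : G.IsClique (X : Set α)) (hcard : 2 ≤ X.card) : IsDeltaClique E Δ X (-Δ) Δ := by
  refine ⟨hcard, by linarith, fun u hu v hv huv τ hτ hτ' => ⟨0, ?_, ?_, hE u v (hX hu hv huv)⟩⟩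
  · rwa [sub_self, max_eq_left (by linarith)] at hτ'
  · exact le_min (by linarith) hΔ

theorem graph_clique_iff_deltaClique_general {α : Type*}
    (G : SimpleGraph α) (Δ : ℝ) (hΔ : 0 < Δ)
    (E : Finset (ℝ × α × α))
    (hE : ∀ t : ℝ, ∀ u v : α, (t, u, v) ∈ E ↔ t = 0 ∧ G.Adj u v)
    (C : Finset α) (hcard : 2 ≤ C.card) :
    (G.IsClique (C : Set α) ∧
        ∀ D : Finset α, G.IsClique (D : Set α) → C ⊆ D → D = C) ↔
      IsMaxDeltaClique E Δ C (-Δ) Δ := by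
  have hAdj : ∀ t u v, (t, u, v) ∈ E → G.Adj u v := fun t u v h => ((hE t u v).1 h).2
  have hZero : ∀ t u v, (t, u, v) ∈ E → t = 0 := fun t u v h => ((hE t u v).1 h).1
  have hLink : ∀ u v, G.Adj u v → ((0 : ℝ), u, v) ∈ E := fun u v h => (hE 0 u v).2 ⟨rfl, h⟩
  constructor
  · rintro ⟨hC, hCmax⟩
    refine ⟨isDeltaClique_of_isClique hLink hΔ.le hC hcard, fun X b e hX hCX hb he => ?_⟩
    obtain ⟨hb', he'⟩ := hX.neg_le_and_le_of_time_eq_zero hZero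
    exact ⟨hCmax X (hX.isClique hAdj) hCX, by linarith, by linarith⟩
  · rintro ⟨hC, hCmax⟩
    refine ⟨hC.isClique hAdj, fun D hD hCD => ?_⟩
    have hD' := isDeltaClique_of_isClique hLink hΔ.le hD (hcard.trans (Finset.card_le_card hCD))
    exact (hCmax D _ _ hD' hCD le_rfl le_rfl).1

/-- for a finite simple graph `G` and the link stream whose links are
`(0, u, v)` for adjacent `u, v`, a set `C` with `|C| ≥ 2` is a maximal clique of `G`
iff `(C, [-Δ, Δ])` is a maximal `Δ`-clique of the link stream. -/
theorem graph_clique_iff_deltaClique {α : Type*} [Fintype α] [DecidableEq α]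
    (G : SimpleGraph α) (Δ : ℝ) (hΔ : 0 < Δ)
    (E : Finset (ℝ × α × α))
    (hE : ∀ t : ℝ, ∀ u v : α, (t, u, v) ∈ E ↔ t = 0 ∧ G.Adj u v)
    (C : Finset α) (hcard : 2 ≤ C.card) :
    (G.IsClique (C : Set α) ∧
        ∀ D : Finset α, G.IsClique (D : Set α) → C ⊆ D → D = C) ↔
      IsMaxDeltaClique E Δ C (-Δ) Δ :=
  graph_clique_iff_deltaClique_general G Δ hΔ E hE C hcard
end
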